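/- Let $q : \mathbb{Z}^n \times \mathbb{Z}^n \to \mathbb{C}$ and suppose there exist $\sigma \in \mathbb{R}$ and, for $N = n+1+\lceil|\sigma|\rceil$, a constant $C_N > 0$ such that $|q(\xi,\eta)| \leq C_N (1+|\xi-\eta|)^{-N}(1+|\eta|)^{\sigma}$ for all $\xi,\eta$. Define $Q$ on sequences by $(Qa)(\xi) = \sum_{\eta} q(\xi,\eta) a(\eta)$. Then there is a constant $M > 0$ (depending only on $n$, $\sigma$, $C_N$) such that for all finitely supported $a : \mathbb{Z}^n \to \mathbb{C}$, $\left(\sum_{\xi} |(Qa)(\xi)|^2\right)^{1/2} \leq M \left(\sum_{\eta} (1+|\eta|)^{2\sigma} |a(\eta)|^2\right)^{1/2}$. -/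

import Mathlib

/-- Euclidean norm of a lattice point of `ℤ^n`. -/
noncomputable def znorm {n : ℕ} (ξ : Fin n → ℤ) : ℝ :=
  Real.sqrt (∑ i, ((ξ i : ℝ)) ^ 2)

/-!
Bound the kernel by a translation-invariant one: `‖q ξ η * a η‖ ≤ F (ξ - η) * b η` with
`F ζ = C_N (1 + |ζ|)^(-N)` and `b η = (1 + |η|)^σ ‖a η‖`. As `N > n`, `F` is summable on `ℤⁿ`
(compare it with `∏ᵢ (1 + |ζᵢ|)^(-N/n)`). Then Young's inequality `‖F ⋆ b‖₂ ≤ ‖F‖₁ ‖b‖₂`,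
i.e. Schur's test with all row and column sums equal to `‖F‖₁`, gives `M = ‖F‖₁`.
-/

open Finset

theorem summable_fintype_prod_of_nonneg {ι : Type*} [Fintype ι] {κ : ι → Type*}
    {f : ∀ i, κ i → ℝ} (hf0 : ∀ i j, 0 ≤ f i j) (hf : ∀ i, Summable (f i)) :
    Summable fun x : ∀ i, κ i => ∏ i, f i (x i) := by
  classical
  refine summable_of_sum_le (c := ∏ i, ∑' j, f i j)
    (fun x => prod_nonneg fun i _ => hf0 i _) fun s => ?_
  let box := Fintype.piFinset fun i => s.image fun x => x i
  calc ∑ x ∈ s, ∏ i, f i (x i)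
      ≤ ∑ x ∈ box, ∏ i, f i (x i) :=
        sum_le_sum_of_subset_of_nonneg
          (fun x hx => Fintype.mem_piFinset.mpr fun i => mem_image_of_mem _ hx)
          (fun x _ _ => prod_nonneg fun i _ => hf0 i _)
    _ = ∏ i, ∑ j ∈ s.image (fun x => x i), f i j := (prod_univ_sum _ _).symm
    _ ≤ ∏ i, ∑' j, f i j :=
        prod_le_prod (fun i _ => sum_nonneg fun j _ => hf0 i j)
          (fun i _ => (hf i).sum_le_tsum _ (fun j _ => hf0 i j))

theorem summable_one_add_abs_int_rpow_neg {b : ℝ} (hb : 1 < b) :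
    Summable fun k : ℤ => (1 + |(k : ℝ)|) ^ (-b) := by
  refine (Real.summable_abs_int_rpow hb).of_norm_bounded_eventually ?_
  filter_upwards [Filter.eventually_cofinite_ne 0] with k hk
  have hk1 : (1 : ℝ) ≤ |(k : ℝ)| := by exact_mod_cast Int.one_le_abs hk
  rw [Real.norm_of_nonneg (by positivity)]
  exact Real.rpow_le_rpow_of_nonpos (by linarith) (by linarith) (by linarith)

theorem znorm_nonneg {n : ℕ} (ξ : Fin n → ℤ) : 0 ≤ znorm ξ := Real.sqrt_nonneg _

theorem abs_le_znorm {n : ℕ} (ξ : Fin n → ℤ) (i : Fin n) : |(ξ i : ℝ)| ≤ znorm ξ := by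
  rw [← Real.sqrt_sq_eq_abs]
  exact Real.sqrt_le_sqrt
    (single_le_sum (f := fun j => ((ξ j : ℝ)) ^ 2) (fun j _ => sq_nonneg _) (mem_univ i))

theorem one_add_znorm_rpow_neg_le_prod {n : ℕ} (hn : n ≠ 0) {r : ℝ} (hr : 0 ≤ r)
    (ζ : Fin n → ℤ) :
    (1 + znorm ζ) ^ (-r) ≤ ∏ i, (1 + |(ζ i : ℝ)|) ^ (-(r / n)) := by
  have hz : 0 ≤ 1 + znorm ζ := by linarith [znorm_nonneg ζ]
  calc (1 + znorm ζ) ^ (-r) = ∏ _i : Fin n, (1 + znorm ζ) ^ (-(r / n)) := by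
        rw [prod_const, card_univ, Fintype.card_fin, ← Real.rpow_mul_natCast hz,
          neg_mul, div_mul_cancel₀ r (Nat.cast_ne_zero.mpr hn)]
    _ ≤ ∏ i, (1 + |(ζ i : ℝ)|) ^ (-(r / n)) :=
        prod_le_prod (fun i _ => by positivity) fun i _ =>
          Real.rpow_le_rpow_of_nonpos (by positivity) (by linarith [abs_le_znorm ζ i])
            (by simp only [neg_nonpos]; positivity)

theorem summable_one_add_znorm_rpow_neg {n : ℕ} {r : ℝ} (hr : n < r) :
    Summable fun ζ : Fin n → ℤ => (1 + znorm ζ) ^ (-r) := by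
  rcases eq_or_ne n 0 with rfl | hn
  · exact .of_finite
  have hb : 1 < r / n := (one_lt_div (by positivity)).mpr hr
  refine (summable_fintype_prod_of_nonneg (fun _ _ => by positivity)
    fun _ => summable_one_add_abs_int_rpow_neg hb).of_nonneg_of_le
    (fun ζ => Real.rpow_nonneg (by linarith [znorm_nonneg ζ]) _)
    (one_add_znorm_rpow_neg_le_prod hn (n.cast_nonneg.trans hr.le))

theorem norm_tsum_mul_le_sum {ι R : Type*} [NormedRing R] {S : Finset ι} {a c : ι → R}
    (ha : Function.support a ⊆ S) {k : ι → ℝ} (hc : ∀ i, ‖c i‖ ≤ k i) :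
    ‖∑' i, c i * a i‖ ≤ ∑ i ∈ S, k i * ‖a i‖ := by
  rw [tsum_eq_sum' ((Function.support_mul_subset_right _ _).trans ha)]
  exact (norm_sum_le _ _).trans <| sum_le_sum fun i _ =>
    (norm_mul_le _ _).trans (mul_le_mul_of_nonneg_right (hc i) (norm_nonneg _))

section Translates

variable {G : Type*} [AddGroup G] {F : G → ℝ}

theorem sum_apply_sub_le_tsum (hF0 : 0 ≤ F) (hF : Summable F) (S : Finset G) (ξ : G) :
    ∑ η ∈ S, F (ξ - η) ≤ ∑' ζ, F ζ := by
  rw [← (Equiv.subLeft ξ).tsum_eq F]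
  exact ((Equiv.subLeft ξ).summable_iff.mpr hF).sum_le_tsum S fun η _ => hF0 _

theorem sq_sum_apply_sub_mul_le (hF0 : 0 ≤ F) (hF : Summable F) (S : Finset G) (b : G → ℝ)
    (ξ : G) :
    (∑ η ∈ S, F (ξ - η) * b η) ^ 2 ≤ (∑' ζ, F ζ) * ∑ η ∈ S, F (ξ - η) * b η ^ 2 :=
  calc (∑ η ∈ S, F (ξ - η) * b η) ^ 2
      ≤ (∑ η ∈ S, F (ξ - η)) * ∑ η ∈ S, F (ξ - η) * b η ^ 2 :=
        S.sum_sq_le_sum_mul_sum_of_sq_le_mul (fun η _ => hF0 _)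
          (fun η _ => mul_nonneg (hF0 _) (sq_nonneg _)) fun η _ => le_of_eq (by ring)
    _ ≤ (∑' ζ, F ζ) * ∑ η ∈ S, F (ξ - η) * b η ^ 2 :=
        mul_le_mul_of_nonneg_right (sum_apply_sub_le_tsum hF0 hF S ξ)
          (sum_nonneg fun η _ => mul_nonneg (hF0 _) (sq_nonneg _))

theorem hasSum_sum_apply_sub_mul (hF : Summable F) (S : Finset G) (c : G → ℝ) :
    HasSum (fun ξ => ∑ η ∈ S, F (ξ - η) * c η) ((∑' ζ, F ζ) * ∑ η ∈ S, c η) := by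
  rw [mul_sum]
  refine hasSum_sum fun η _ => HasSum.mul_right _ ?_
  rw [← (Equiv.subRight η).tsum_eq F]
  exact ((Equiv.subRight η).summable_iff.mpr hF).hasSum

theorem sqrt_tsum_norm_sq_le_of_le_sum_apply_sub {E : Type*} [SeminormedAddCommGroup E]
    (hF0 : 0 ≤ F) (hF : Summable F) (S : Finset G) (b : G → ℝ) (u : G → E)
    (hu : ∀ ξ, ‖u ξ‖ ≤ ∑ η ∈ S, F (ξ - η) * b η) :
    √(∑' ξ, ‖u ξ‖ ^ 2) ≤ (∑' ζ, F ζ) * √(∑ η ∈ S, b η ^ 2) := by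
  set K := ∑' ζ, F ζ
  have hdom : ∀ ξ, ‖u ξ‖ ^ 2 ≤ K * ∑ η ∈ S, F (ξ - η) * b η ^ 2 := fun ξ =>
    (pow_le_pow_left₀ (norm_nonneg _) (hu ξ) 2).trans (sq_sum_apply_sub_mul_le hF0 hF S b ξ)
  have hsum := (hasSum_sum_apply_sub_mul hF S fun η => b η ^ 2).mul_left K
  have hle : ∑' ξ, ‖u ξ‖ ^ 2 ≤ K ^ 2 * ∑ η ∈ S, b η ^ 2 := by
    rw [sq, mul_assoc, ← hsum.tsum_eq]
    exact (hsum.summable.of_nonneg_of_le (fun _ => sq_nonneg _) hdom).tsum_le_tsum hdom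
      hsum.summable
  calc √(∑' ξ, ‖u ξ‖ ^ 2) ≤ √(K ^ 2 * ∑ η ∈ S, b η ^ 2) := Real.sqrt_le_sqrt hle
    _ = K * √(∑ η ∈ S, b η ^ 2) := by
        rw [Real.sqrt_mul (sq_nonneg K), Real.sqrt_sq (tsum_nonneg hF0)]

end Translates

/-- Discrete Schur-test: a kernel on `ℤ^n × ℤ^n` with off-diagonal decay of order
`N = n+1+⌈|σ|⌉` relative to the weight `(1+|η|)^σ` is bounded from the weighted `ℓ²`
space into `ℓ²`. -/
theorem discrete_schur_test (n : ℕ) (σ : ℝ)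
    (q : (Fin n → ℤ) → (Fin n → ℤ) → ℂ) (CN : ℝ) (hCN : 0 < CN)
    (hq : ∀ ξ η : Fin n → ℤ, ‖q ξ η‖ ≤
      CN * (1 + znorm (ξ - η)) ^ (-((n : ℝ) + 1 + (⌈|σ|⌉ : ℝ))) * (1 + znorm η) ^ σ) :
    ∃ M > 0, ∀ a : (Fin n → ℤ) → ℂ, (Function.support a).Finite →
      Real.sqrt (∑' ξ : Fin n → ℤ, ‖∑' η : Fin n → ℤ, q ξ η * a η‖ ^ 2)
        ≤ M * Real.sqrt (∑' η : Fin n → ℤ,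
            (1 + znorm η) ^ (2 * σ) * ‖a η‖ ^ 2) := by
  set F : (Fin n → ℤ) → ℝ := fun ζ => CN * (1 + znorm ζ) ^ (-((n : ℝ) + 1 + (⌈|σ|⌉ : ℝ)))
  have hweight_pos : ∀ ζ : Fin n → ℤ, 0 < 1 + znorm ζ := fun ζ => by linarith [znorm_nonneg ζ]
  have hF0 : 0 ≤ F := fun ζ => by have := hweight_pos ζ; positivity
  have hF : Summable F := by
    have hceil : (0 : ℝ) ≤ ⌈|σ|⌉ := by exact_mod_cast Int.ceil_nonneg (abs_nonneg σ)
    exact (summable_one_add_znorm_rpow_neg (by linarith)).mul_left CN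
  refine ⟨∑' ζ, F ζ, hF.tsum_pos hF0 0 (by simp [F, znorm, hCN]), fun a ha => ?_⟩
  set S := ha.toFinset
  have ha_supp : Function.support a ⊆ S := by simp [S]
  set b : (Fin n → ℤ) → ℝ := fun η => (1 + znorm η) ^ σ * ‖a η‖
  have hweighted : ∑' η, (1 + znorm η) ^ (2 * σ) * ‖a η‖ ^ 2 = ∑ η ∈ S, b η ^ 2 := by
    rw [tsum_eq_sum' ((Function.support_mul_subset_right _ _).trans
      (by simpa [Function.support_pow] using ha_supp))]
    exact sum_congr rfl fun η _ => by
      rw [mul_pow, mul_comm 2 σ, Real.rpow_mul (hweight_pos η).le, Real.rpow_two]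
  rw [hweighted]
  refine sqrt_tsum_norm_sq_le_of_le_sum_apply_sub hF0 hF S b _ fun ξ =>
    (norm_tsum_mul_le_sum ha_supp (hq ξ)).trans_eq (sum_congr rfl fun η _ => ?_)
  ring
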